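/- Linear equivalence (s(R,S) = 0) is an equivalence relation on the set of unbounded subsets of a metric space X. -/
import Mathlib


open Metric Set Bornology Filter

def cone {X : Type*} [MetricSpace X] (o : X) (R : Set X) (α a : ℝ) : Set X :=
  ⋃ x ∈ R, Metric.closedBall x (α * dist o x + a)

noncomputable def sPlus {X : Type*} [MetricSpace X] (o : X) (R S : Set X) : ℝ :=
  sInf {α : ℝ | 0 ≤ α ∧ ∃ a : ℝ, 0 ≤ a ∧ S ⊆ cone o R α a}

noncomputable def sFun {X : Type*} [MetricSpace X] (o : X) (R S : Set X) : ℝ :=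
  max (sPlus o R S) (sPlus o S R)

noncomputable def tFun {X : Type*} [MetricSpace X] (o : X) (R S : Set X) : ℝ :=
  Real.sqrt (sFun o R S)

lemma sSet_bddBelow {X : Type*} [MetricSpace X] (o : X) (R S : Set X) :
    BddBelow {α : ℝ | 0 ≤ α ∧ ∃ a : ℝ, 0 ≤ a ∧ S ⊆ cone o R α a} :=
  ⟨0, fun _ h => h.1⟩

lemma sPlus_nonneg {X : Type*} [MetricSpace X] (o : X) (R S : Set X) :
    0 ≤ sPlus o R S :=
  Real.sInf_nonneg fun _ h => h.1

lemma two_mem_sSet {X : Type*} [MetricSpace X] (o : X) {R : Set X}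
    (hR : ¬ IsBounded R) (S : Set X) :
    (2:ℝ) ∈ {α : ℝ | 0 ≤ α ∧ ∃ a : ℝ, 0 ≤ a ∧ S ⊆ cone o R α a} := by
  refine ⟨by norm_num, 0, le_refl 0, fun x hx => ?_⟩
  have hr : ∃ r ∈ R, dist o x ≤ dist o r := by
    by_contra h
    push_neg at h
    exact hR ((Metric.isBounded_closedBall (x := o) (r := dist o x)).subset
      fun r hrR => by
        simp only [Metric.mem_closedBall, dist_comm r o]
        exact (h r hrR).le)
  obtain ⟨r, hrR, hle⟩ := hr
  refine mem_iUnion₂.2 ⟨r, hrR, ?_⟩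
  simp only [Metric.mem_closedBall]
  have h1 : dist x r ≤ dist x o + dist o r := dist_triangle x o r
  have h2 : dist x o = dist o x := dist_comm x o
  linarith

lemma sSet_nonempty {X : Type*} [MetricSpace X] (o : X) {R : Set X}
    (hR : ¬ IsBounded R) (S : Set X) :
    {α : ℝ | 0 ≤ α ∧ ∃ a : ℝ, 0 ≤ a ∧ S ⊆ cone o R α a}.Nonempty :=
  ⟨2, two_mem_sSet o hR S⟩

lemma sPlus_self {X : Type*} [MetricSpace X] (o : X) (R : Set X) :
    sPlus o R R = 0 := by
  refine le_antisymm ?_ (sPlus_nonneg o R R)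
  refine csInf_le (sSet_bddBelow o R R) ⟨le_refl 0, 0, le_refl 0, fun x hx => ?_⟩
  refine mem_iUnion₂.2 ⟨x, hx, ?_⟩
  simp

lemma sPlus_trans {X : Type*} [MetricSpace X] (o : X) {R S T : Set X}
    (hR : ¬ IsBounded R) (hS : ¬ IsBounded S)
    (h1 : sPlus o R S = 0) (h2 : sPlus o S T = 0) : sPlus o R T = 0 := by
  refine le_antisymm ?_ (sPlus_nonneg o R T)
  have key : ∀ ε : ℝ, 0 < ε → sPlus o R T ≤ ε := by
    intro ε hε
    set δ : ℝ := min (ε/3) 1 with hδdef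
    have hδpos : 0 < δ := lt_min (by linarith) one_pos
    have hδ1 : δ ≤ 1 := min_le_right _ _
    have hδε : δ ≤ ε/3 := min_le_left _ _
    obtain ⟨α, hαmem, hαlt⟩ := (csInf_lt_iff (sSet_bddBelow o R S)
      (sSet_nonempty o hR S)).1 (by rw [← sPlus, h1]; exact hδpos)
    obtain ⟨β, hβmem, hβlt⟩ := (csInf_lt_iff (sSet_bddBelow o S T)
      (sSet_nonempty o hS T)).1 (by rw [← sPlus, h2]; exact hδpos)
    obtain ⟨hα0, a, ha0, hSc⟩ := hαmem
    obtain ⟨hβ0, b, hb0, hTc⟩ := hβmem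
    have hmem : (α + β + β * α) ∈
        {γ : ℝ | 0 ≤ γ ∧ ∃ a : ℝ, 0 ≤ a ∧ T ⊆ cone o R γ a} := by
      refine ⟨by positivity, a + b + β * a, by positivity, fun t ht => ?_⟩
      obtain ⟨s, hsS, hts⟩ := mem_iUnion₂.1 (hTc ht)
      obtain ⟨r, hrR, hsr⟩ := mem_iUnion₂.1 (hSc hsS)
      refine mem_iUnion₂.2 ⟨r, hrR, ?_⟩
      simp only [Metric.mem_closedBall] at hts hsr ⊢
      have hos : dist o s ≤ (1 + α) * dist o r + a := by
        have := dist_triangle o r s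
        have : dist r s = dist s r := dist_comm r s
        nlinarith [dist_triangle o r s]
      have htr : dist t r ≤ dist t s + dist s r := dist_triangle t s r
      nlinarith
    have hle : sPlus o R T ≤ α + β + β * α := csInf_le (sSet_bddBelow o R T) hmem
    have : α + β + β * α ≤ 3 * δ := by nlinarith
    linarith
  by_contra h
  push_neg at h
  exact absurd (key _ (by linarith : (0:ℝ) < sPlus o R T / 2)) (by linarith)

lemma sFun_eq_zero_iff {X : Type*} [MetricSpace X] (o : X) (R S : Set X) :
    sFun o R S = 0 ↔ sPlus o R S = 0 ∧ sPlus o S R = 0 := by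
  unfold sFun
  constructor
  · intro h
    have h1 := le_max_left (sPlus o R S) (sPlus o S R)
    have h2 := le_max_right (sPlus o R S) (sPlus o S R)
    rw [h] at h1 h2
    exact ⟨le_antisymm h1 (sPlus_nonneg o R S), le_antisymm h2 (sPlus_nonneg o S R)⟩
  · rintro ⟨h1, h2⟩
    rw [h1, h2, max_self]

theorem stmt7 {X : Type*} [MetricSpace X] (o : X) :
    Equivalence (fun R S : {A : Set X // ¬ Bornology.IsBounded A} =>
      sFun o R.1 S.1 = 0) := by
  constructor
  · intro R
    rw [sFun_eq_zero_iff]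
    exact ⟨sPlus_self o R.1, sPlus_self o R.1⟩
  · intro R S h
    rw [sFun_eq_zero_iff] at h ⊢
    exact ⟨h.2, h.1⟩
  · intro R S T hRS hST
    rw [sFun_eq_zero_iff] at hRS hST ⊢
    exact ⟨sPlus_trans o R.2 S.2 hRS.1 hST.1,
      sPlus_trans o T.2 S.2 hST.2 hRS.2⟩
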